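/- Let f = h + ḡ ∈ S_H^δ[α, β] with δ ≥ 0, α ∈ [0,1), β ∈ (0,1). Then the harmonic Bloch constant B_f = sup_{z∈𝔻} (1-|z|²)(|h'(z)| + |g'(z)|) satisfies B_f ≤ ((1+β)/((2-α)2^{δ-1})) · ((1+r₀-r₀²-r₀³)((2-α)2^{δ-1} + (1-α)r₀))/(1+βr₀), where r₀ is the unique root in (0,1) of H(r) = 2^{δ-1}(2-α)(1-β) + (1-α) - 2(2^{δ-1}(2-α)-(1-α))r - (2^{δ-1}(2-α)(3+β)+(1-α)(3-β))r² - (2^δ(2-α)β+(1-α)(4+2β))r³ - 3(1-α)βr⁴. -/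

import Mathlib

/-!
By Schwarz–Pick the dilatation satisfies `‖w z‖ ≤ (β + r) / (1 + β r)` with `r = ‖z‖`, and
since `(n + 2) D ≤ (n + 2) ^ δ (n + 2 - α)` for `D = (2 - α) 2 ^ (δ - 1)`, the coefficient
condition gives `‖h' z‖ ≤ 1 + c r / D` with `c = 1 - α`. As `‖g'‖ = ‖w‖ ‖h'‖`, the quantity
`(1 - r²)(‖h'‖ + ‖g'‖)` is at most `(1 + β) / D · (1 + r - r² - r³)(D + c r) / (1 + β r)`.
The polynomial vanishing at `r₀` is the numerator of the derivative of this function of `r`,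
and the cross-multiplied difference of its values at `r₀` and at `r` is `(r - r₀)²` times a
nonnegative polynomial, so `r₀` is its maximum on `r ≥ 0`.
-/

open Complex Metric ComplexConjugate

lemma norm_one_sub_conj_mul_sq_sub_norm_sub_sq (b u : ℂ) :
    ‖1 - conj b * u‖ ^ 2 - ‖b - u‖ ^ 2 = (1 - ‖b‖ ^ 2) * (1 - ‖u‖ ^ 2) := by
  simp only [Complex.sq_norm, Complex.normSq_apply, sub_re, sub_im, mul_re, mul_im, conj_re,
    conj_im, one_re, one_im]
  ring

lemma norm_sub_lt_norm_one_sub_conj_mul {b u : ℂ} (hb : ‖b‖ < 1) (hu : ‖u‖ < 1) :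
    ‖b - u‖ < ‖1 - conj b * u‖ := by
  have hid := norm_one_sub_conj_mul_sq_sub_norm_sub_sq b u
  have hprod : 0 < (1 - ‖b‖ ^ 2) * (1 - ‖u‖ ^ 2) := by
    apply mul_pos <;> nlinarith [norm_nonneg b, norm_nonneg u]
  exact lt_of_pow_lt_pow_left₀ 2 (norm_nonneg _) (by linarith)

lemma one_sub_conj_mul_ne_zero {b u : ℂ} (hb : ‖b‖ < 1) (hu : ‖u‖ < 1) :
    1 - conj b * u ≠ 0 :=
  norm_pos_iff.mp ((norm_nonneg _).trans_lt (norm_sub_lt_norm_one_sub_conj_mul hb hu))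

lemma sub_div_one_sub_conj_mul_sub_div {b u : ℂ} (hb : ‖b‖ < 1) (hu : ‖u‖ < 1) :
    (b - (b - u) / (1 - conj b * u)) / (1 - conj b * ((b - u) / (1 - conj b * u))) = u := by
  have hD := one_sub_conj_mul_ne_zero hb hu
  have hbb : 1 - conj b * b ≠ 0 := one_sub_conj_mul_ne_zero hb hb
  have hnum : b - (b - u) / (1 - conj b * u) = u * (1 - conj b * b) / (1 - conj b * u) := by
    rw [eq_div_iff hD, sub_mul, div_mul_cancel₀ _ hD]; ring
  have hden : 1 - conj b * ((b - u) / (1 - conj b * u)) = (1 - conj b * b) / (1 - conj b * u) := by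
    rw [eq_div_iff hD, sub_mul, mul_assoc, div_mul_cancel₀ _ hD]; ring
  rw [hnum, hden, div_div_div_cancel_right₀ hD, mul_div_assoc, div_self hbb, mul_one]

lemma norm_sub_div_one_sub_conj_mul_le {b u : ℂ} (hb : ‖b‖ < 1) (hu : ‖u‖ < 1) :
    ‖(b - u) / (1 - conj b * u)‖ ≤ (‖b‖ + ‖u‖) / (1 + ‖b‖ * ‖u‖) := by
  have hD : 0 < ‖1 - conj b * u‖ := norm_pos_iff.mpr (one_sub_conj_mul_ne_zero hb hu)
  have hD_le : ‖1 - conj b * u‖ ≤ 1 + ‖b‖ * ‖u‖ := by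
    simpa only [norm_one, norm_mul, RCLike.norm_conj] using norm_sub_le (1 : ℂ) (conj b * u)
  have hid := norm_one_sub_conj_mul_sq_sub_norm_sub_sq b u
  have hprod : 0 ≤ (1 - ‖b‖ ^ 2) * (1 - ‖u‖ ^ 2) := by
    apply mul_nonneg <;> nlinarith [norm_nonneg b, norm_nonneg u]
  rw [norm_div, div_le_div_iff₀ hD (by positivity)]
  refine le_of_pow_le_pow_left₀ two_ne_zero (by positivity) ?_
  -- with `s = ‖b‖`, `t = ‖u‖`, `(1 + st)² - (s + t)² = (1 - s²)(1 - t²)`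
  -- reduces this to `‖1 - b̄u‖ ≤ 1 + st`
  nlinarith [mul_nonneg hprod (by nlinarith [norm_nonneg (1 - conj b * u)] :
    0 ≤ (1 + ‖b‖ * ‖u‖) ^ 2 - ‖1 - conj b * u‖ ^ 2)]

lemma add_div_one_add_mul_le_add_div_one_add_mul {s t t' : ℝ} (hs : 0 ≤ s) (hs1 : s ≤ 1)
    (ht : 0 ≤ t) (htt' : t ≤ t') : (s + t) / (1 + s * t) ≤ (s + t') / (1 + s * t') := by
  rw [div_le_div_iff₀ (by positivity) (by nlinarith)]
  nlinarith [mul_nonneg (sub_nonneg.mpr htt') (by nlinarith : 0 ≤ 1 - s ^ 2)]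

lemma norm_le_div_of_mapsTo_ball {w : ℂ → ℂ} (hd : DifferentiableOn ℂ w (ball 0 1))
    (hmaps : Set.MapsTo w (ball 0 1) (ball 0 1)) {z : ℂ} (hz : z ∈ ball (0 : ℂ) 1) :
    ‖w z‖ ≤ (‖w 0‖ + ‖z‖) / (1 + ‖w 0‖ * ‖z‖) := by
  have hw : ∀ y ∈ ball (0 : ℂ) 1, ‖w y‖ < 1 := fun y hy => mem_ball_zero_iff.mp (hmaps hy)
  set b := w 0
  have hb : ‖b‖ < 1 := hw 0 (mem_ball_self one_pos)
  set φ : ℂ → ℂ := fun y => (b - w y) / (1 - conj b * w y)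
  have hφd : DifferentiableOn ℂ φ (ball 0 1) :=
    ((differentiableOn_const b).sub hd).div ((differentiableOn_const 1).sub
      ((differentiableOn_const _).mul hd)) fun y hy => one_sub_conj_mul_ne_zero hb (hw y hy)
  have hφmaps : Set.MapsTo φ (ball 0 1) (closedBall 0 1) := fun y hy => by
    rw [mem_closedBall_zero_iff, norm_div]
    exact div_le_one_of_le₀ (norm_sub_lt_norm_one_sub_conj_mul hb (hw y hy)).le (norm_nonneg _)
  have hφz : ‖φ z‖ ≤ ‖z‖ := by
    simpa using Complex.norm_le_norm_of_mapsTo_ball hφd hφmaps (by simp [φ, b])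
      (mem_ball_zero_iff.mp hz)
  have hz1 : ‖z‖ < 1 := mem_ball_zero_iff.mp hz
  have hwz : w z = (b - φ z) / (1 - conj b * φ z) :=
    (sub_div_one_sub_conj_mul_sub_div hb (hw z hz)).symm
  calc ‖w z‖ ≤ (‖b‖ + ‖φ z‖) / (1 + ‖b‖ * ‖φ z‖) := by
        rw [hwz]; exact norm_sub_div_one_sub_conj_mul_le hb (hφz.trans_lt hz1)
    _ ≤ (‖b‖ + ‖z‖) / (1 + ‖b‖ * ‖z‖) :=
        add_div_one_add_mul_le_add_div_one_add_mul (norm_nonneg _) hb.le (norm_nonneg _) hφz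

lemma norm_mul_natCast_mul_pow_pred_le (c y : ℂ) (n : ℕ) (hy : ‖y‖ ≤ 1) :
    ‖c * (n * y ^ (n - 1))‖ ≤ n * ‖c‖ := by
  rw [norm_mul, norm_mul, norm_pow, Complex.norm_natCast]
  calc ‖c‖ * (n * ‖y‖ ^ (n - 1)) ≤ ‖c‖ * (n * 1) := by gcongr; exact pow_le_one₀ (norm_nonneg y) hy
    _ = n * ‖c‖ := by ring

lemma hasDerivAt_of_hasSum_pow {h : ℂ → ℂ} {a : ℕ → ℂ}
    (hh : ∀ z ∈ ball (0 : ℂ) 1, HasSum (fun n => a n * z ^ n) (h z))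
    (ha : Summable fun n : ℕ => n * ‖a n‖) {z : ℂ} (hz : z ∈ ball (0 : ℂ) 1) :
    HasDerivAt h (∑' n : ℕ, a n * (n * z ^ (n - 1))) z := by
  have hbound : ∀ (n : ℕ) (y : ℂ), y ∈ ball (0 : ℂ) 1 → ‖a n * (n * y ^ (n - 1))‖ ≤ n * ‖a n‖ :=
    fun n y hy => norm_mul_natCast_mul_pow_pred_le _ _ n (mem_ball_zero_iff.mp hy).le
  have hseries := hasDerivAt_tsum_of_isPreconnected ha isOpen_ball
    (convex_ball (0 : ℂ) 1).isPreconnected (fun n y _ => (hasDerivAt_pow n y).const_mul (a n))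
    hbound (mem_ball_self one_pos) (hh 0 (mem_ball_self one_pos)).summable hz
  refine hseries.congr_of_eventuallyEq ?_
  filter_upwards [isOpen_ball.mem_nhds hz] with y hy using (hh y hy).tsum_eq.symm

lemma norm_deriv_le_of_hasSum_pow {h : ℂ → ℂ} {a : ℕ → ℂ}
    (hh : ∀ z ∈ ball (0 : ℂ) 1, HasSum (fun n => a n * z ^ n) (h z))
    (ha : Summable fun n : ℕ => ((n : ℝ) + 2) * ‖a (n + 2)‖) {z : ℂ} (hz : z ∈ ball (0 : ℂ) 1) :
    ‖deriv h z‖ ≤ ‖a 1‖ + ‖z‖ * ∑' n : ℕ, ((n : ℝ) + 2) * ‖a (n + 2)‖ := by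
  have ha' : Summable fun n : ℕ => n * ‖a n‖ :=
    (summable_nat_add_iff 2).mp (by simpa only [Nat.cast_add, Nat.cast_ofNat] using ha)
  set v : ℕ → ℝ := fun n => ‖a n * (n * z ^ (n - 1))‖
  have hz1 : ‖z‖ ≤ 1 := (mem_ball_zero_iff.mp hz).le
  have hv : Summable v := ha'.of_nonneg_of_le (fun n => norm_nonneg _)
    fun n => norm_mul_natCast_mul_pow_pred_le _ _ n hz1
  have hv_tail : ∀ n : ℕ, v (n + 2) ≤ ‖z‖ * (((n : ℝ) + 2) * ‖a (n + 2)‖) := fun n => by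
    simp only [v, norm_mul, norm_pow, Complex.norm_natCast]
    push_cast
    calc ‖a (n + 2)‖ * (((n : ℝ) + 2) * ‖z‖ ^ (n + 1)) ≤ ‖a (n + 2)‖ * (((n : ℝ) + 2) * ‖z‖) := by
          gcongr; exact pow_le_of_le_one (norm_nonneg z) hz1 n.succ_ne_zero
      _ = ‖z‖ * (((n : ℝ) + 2) * ‖a (n + 2)‖) := by ring
  rw [(hasDerivAt_of_hasSum_pow hh ha' hz).deriv, ← tsum_mul_left]
  calc ‖∑' n : ℕ, a n * (n * z ^ (n - 1))‖ ≤ ∑' n, v n := norm_tsum_le_tsum_norm hv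
    _ = v 0 + (v 1 + ∑' n, v (n + 2)) := by
      rw [hv.tsum_eq_zero_add, ((summable_nat_add_iff 1).mpr hv).tsum_eq_zero_add]
    _ ≤ 0 + (‖a 1‖ + ∑' n : ℕ, ‖z‖ * (((n : ℝ) + 2) * ‖a (n + 2)‖)) :=
      add_le_add (by simp [v]) (add_le_add (by simp [v])
        (((summable_nat_add_iff 2).mpr hv).tsum_le_tsum hv_tail (ha.mul_left _)))
    _ = _ := zero_add _

lemma mul_le_rpow_mul_sub {α δ x : ℝ} (hα0 : 0 ≤ α) (hα2 : α ≤ 2) (hδ : 0 ≤ δ) (hx : 2 ≤ x) :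
    (2 - α) * 2 ^ (δ - 1) * x ≤ x ^ δ * (x - α) := by
  have h2δ : (2 : ℝ) ^ δ = 2 * 2 ^ (δ - 1) := by
    rw [Real.rpow_sub_one two_ne_zero]; ring
  have hmono : (2 : ℝ) ^ δ ≤ x ^ δ := Real.rpow_le_rpow zero_le_two hx hδ
  have hpos : (0 : ℝ) < 2 ^ (δ - 1) := by positivity
  nlinarith [mul_le_mul_of_nonneg_right hmono (by linarith : 0 ≤ x - α),
    mul_nonneg hpos.le (mul_nonneg hα0 (by linarith : 0 ≤ x - 2))]

lemma norm_deriv_le_one_add_of_coeff_bound {α δ : ℝ} (hα0 : 0 ≤ α) (hα1 : α < 1) (hδ : 0 ≤ δ)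
    {h : ℂ → ℂ} {a : ℕ → ℂ} (ha1 : a 1 = 1)
    (hh : ∀ z ∈ ball (0 : ℂ) 1, HasSum (fun n => a n * z ^ n) (h z))
    (hsb : Summable fun n : ℕ =>
      ((n : ℝ) + 2) ^ δ * (((n : ℝ) + 2 - α) / (1 - α)) * ‖a (n + 2)‖)
    (hcoef : ∑' n : ℕ,
      ((n : ℝ) + 2) ^ δ * (((n : ℝ) + 2 - α) / (1 - α)) * ‖a (n + 2)‖ ≤ 1)
    {z : ℂ} (hz : z ∈ ball (0 : ℂ) 1) :
    ‖deriv h z‖ ≤ 1 + (1 - α) / ((2 - α) * 2 ^ (δ - 1)) * ‖z‖ := by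
  set K := (1 - α) / ((2 - α) * (2 : ℝ) ^ (δ - 1))
  have hD : 0 < (2 - α) * (2 : ℝ) ^ (δ - 1) := mul_pos (by linarith) (by positivity)
  have hK : 0 ≤ K := div_nonneg (by linarith) hD.le
  have hterm : ∀ n : ℕ, ((n : ℝ) + 2) * ‖a (n + 2)‖ ≤
      K * (((n : ℝ) + 2) ^ δ * (((n : ℝ) + 2 - α) / (1 - α)) * ‖a (n + 2)‖) := fun n => by
    have hK_mul : K * (((n : ℝ) + 2) ^ δ * (((n : ℝ) + 2 - α) / (1 - α))) =
        ((n : ℝ) + 2) ^ δ * ((n : ℝ) + 2 - α) / ((2 - α) * 2 ^ (δ - 1)) := by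
      have : (1 : ℝ) - α ≠ 0 := by linarith
      simp only [K]
      field_simp
    rw [← mul_assoc, hK_mul]
    refine mul_le_mul_of_nonneg_right ?_ (norm_nonneg _)
    rw [le_div_iff₀ hD, mul_comm]
    exact mul_le_rpow_mul_sub hα0 (by linarith) hδ
      (by linarith [(Nat.cast_nonneg n : (0 : ℝ) ≤ n)])
  have hsum : Summable fun n : ℕ => ((n : ℝ) + 2) * ‖a (n + 2)‖ :=
    (hsb.mul_left K).of_nonneg_of_le (fun n => by positivity) hterm
  calc ‖deriv h z‖ ≤ ‖a 1‖ + ‖z‖ * ∑' n : ℕ, ((n : ℝ) + 2) * ‖a (n + 2)‖ :=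
        norm_deriv_le_of_hasSum_pow hh hsum hz
    _ ≤ 1 + ‖z‖ * (K * 1) := by
      rw [ha1, norm_one]
      gcongr
      calc ∑' n : ℕ, ((n : ℝ) + 2) * ‖a (n + 2)‖
          ≤ ∑' n : ℕ, K * (((n : ℝ) + 2) ^ δ * (((n : ℝ) + 2 - α) / (1 - α)) * ‖a (n + 2)‖) :=
            hsum.tsum_le_tsum hterm (hsb.mul_left K)
        _ ≤ K * 1 := by rw [tsum_mul_left]; gcongr
    _ = 1 + K * ‖z‖ := by ring

noncomputable def blochMajorant (c D β r : ℝ) : ℝ :=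
  (1 + r - r ^ 2 - r ^ 3) * (D + c * r) / (1 + β * r)

lemma one_sub_sq_mul_le_blochMajorant {c D β r x y : ℝ} (hc : 0 ≤ c) (hD : 0 < D) (hβ : 0 ≤ β)
    (hr : 0 ≤ r) (hr1 : r ≤ 1) (hx0 : 0 ≤ x) (hx : x ≤ 1 + c / D * r)
    (hy : y ≤ (β + r) / (1 + β * r)) :
    (1 - r ^ 2) * (x + y * x) ≤ (1 + β) / D * blochMajorant c D β r := by
  have hβr : 0 < 1 + β * r := by positivity
  calc (1 - r ^ 2) * (x + y * x) = (1 - r ^ 2) * ((1 + y) * x) := by ring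
    _ ≤ (1 - r ^ 2) * ((1 + (β + r) / (1 + β * r)) * (1 + c / D * r)) := by
      have : 0 ≤ 1 - r ^ 2 := by nlinarith
      gcongr
    _ = (1 + β) / D * blochMajorant c D β r := by
      unfold blochMajorant
      field_simp
      ring

lemma blochMajorant_le_of_root {c D β r r₀ : ℝ} (hc : 0 ≤ c) (hcD : c ≤ D) (hβ : 0 ≤ β)
    (hr : 0 ≤ r) (hr₀ : 0 ≤ r₀)
    (hroot : D * (1 - β) + c - 2 * (D - c) * r₀ - (D * (3 + β) + c * (3 - β)) * r₀ ^ 2 -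
      (2 * D * β + c * (4 + 2 * β)) * r₀ ^ 3 - 3 * c * β * r₀ ^ 4 = 0) :
    blochMajorant c D β r ≤ blochMajorant c D β r₀ := by
  have hD : 0 ≤ D := hc.trans hcD
  have hQ : 0 ≤ (1 + β * r₀) * (c * r ^ 2 + (D + c + 2 * c * r₀) * r +
      ((D - c) + 2 * (D + c) * r₀ + 3 * c * r₀ ^ 2)) := by
    refine mul_nonneg (by positivity) ?_
    nlinarith [mul_nonneg hc (sq_nonneg r), mul_nonneg hD hr, mul_nonneg hc hr,
      mul_nonneg (mul_nonneg hc hr₀) hr, mul_nonneg hD hr₀, mul_nonneg hc hr₀,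
      mul_nonneg hc (sq_nonneg r₀)]
  have hfactor : (1 + r₀ - r₀ ^ 2 - r₀ ^ 3) * (D + c * r₀) * (1 + β * r) -
      (1 + r - r ^ 2 - r ^ 3) * (D + c * r) * (1 + β * r₀) =
      (r - r₀) ^ 2 * ((1 + β * r₀) * (c * r ^ 2 + (D + c + 2 * c * r₀) * r +
        ((D - c) + 2 * (D + c) * r₀ + 3 * c * r₀ ^ 2))) -
      (r - r₀) * (D * (1 - β) + c - 2 * (D - c) * r₀ -
        (D * (3 + β) + c * (3 - β)) * r₀ ^ 2 -
        (2 * D * β + c * (4 + 2 * β)) * r₀ ^ 3 - 3 * c * β * r₀ ^ 4) := by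
    ring
  rw [hroot, mul_zero, sub_zero] at hfactor
  unfold blochMajorant
  rw [div_le_div_iff₀ (by positivity) (by positivity)]
  nlinarith [mul_nonneg (sq_nonneg (r - r₀)) hQ]

theorem bloch_constant_bound_general
    (α β δ : ℝ) (hα0 : 0 ≤ α) (hα1 : α < 1)
    (hδ : 0 ≤ δ)
    (h g w : ℂ → ℂ) (a : ℕ → ℂ)
    (ha1 : a 1 = 1)
    (hreph : ∀ z ∈ ball (0 : ℂ) 1, HasSum (fun n : ℕ => a n * z ^ n) (h z))
    (hsb : Summable fun n : ℕ =>
      ((n : ℝ) + 2) ^ δ * (((n : ℝ) + 2 - α) / (1 - α)) * ‖a (n + 2)‖)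
    (hcoef : ∑' n : ℕ,
      ((n : ℝ) + 2) ^ δ * (((n : ℝ) + 2 - α) / (1 - α)) * ‖a (n + 2)‖ ≤ 1)
    (hw : DifferentiableOn ℂ w (ball (0 : ℂ) 1))
    (hwlt : ∀ z ∈ ball (0 : ℂ) 1, ‖w z‖ < 1)
    (hw0 : ‖w 0‖ = β)
    (hdil : ∀ z ∈ ball (0 : ℂ) 1, deriv g z = w z * deriv h z)
    (r₀ : ℝ) (hr₀ : r₀ ∈ Set.Ioo (0 : ℝ) 1)
    (hroot : (2 : ℝ) ^ (δ - 1) * (2 - α) * (1 - β) + (1 - α) -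
        2 * ((2 : ℝ) ^ (δ - 1) * (2 - α) - (1 - α)) * r₀ -
        ((2 : ℝ) ^ (δ - 1) * (2 - α) * (3 + β) + (1 - α) * (3 - β)) * r₀ ^ 2 -
        ((2 : ℝ) ^ δ * (2 - α) * β + (1 - α) * (4 + 2 * β)) * r₀ ^ 3 -
        3 * (1 - α) * β * r₀ ^ 4 = 0) :
    (⨆ z ∈ ball (0 : ℂ) 1,
        (1 - ‖z‖ ^ 2) * (‖deriv h z‖ + ‖deriv g z‖)) ≤
      (1 + β) / ((2 - α) * (2 : ℝ) ^ (δ - 1)) *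
        ((1 + r₀ - r₀ ^ 2 - r₀ ^ 3) *
            ((2 - α) * (2 : ℝ) ^ (δ - 1) + (1 - α) * r₀) /
          (1 + β * r₀)) := by
  obtain ⟨hr₀0, hr₀1⟩ := hr₀
  set D := (2 - α) * (2 : ℝ) ^ (δ - 1)
  have hβ : 0 ≤ β := hw0 ▸ norm_nonneg _
  have h2δ : (2 : ℝ) ^ δ = 2 * 2 ^ (δ - 1) := by rw [Real.rpow_sub_one two_ne_zero]; ring
  have hD : 0 < D := mul_pos (by linarith) (by positivity)
  have hcD : 1 - α ≤ D := by nlinarith [Real.one_le_rpow one_le_two hδ]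
  have hpoint : ∀ z ∈ ball (0 : ℂ) 1, (1 - ‖z‖ ^ 2) * (‖deriv h z‖ + ‖deriv g z‖) ≤
      (1 + β) / D * blochMajorant (1 - α) D β r₀ := fun z hz => by
    have hz1 := (mem_ball_zero_iff.mp hz).le
    have hderiv := norm_deriv_le_one_add_of_coeff_bound hα0 hα1 hδ ha1 hreph hsb hcoef hz
    have hdilat : ‖w z‖ ≤ (β + ‖z‖) / (1 + β * ‖z‖) :=
      hw0 ▸ norm_le_div_of_mapsTo_ball hw (fun y hy => mem_ball_zero_iff.mpr (hwlt y hy)) hz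
    have hmax : blochMajorant (1 - α) D β ‖z‖ ≤ blochMajorant (1 - α) D β r₀ :=
      blochMajorant_le_of_root (by linarith) hcD hβ (norm_nonneg z) hr₀0.le
        (by rw [h2δ] at hroot; linear_combination hroot)
    rw [hdil z hz, norm_mul]
    calc _ ≤ (1 + β) / D * blochMajorant (1 - α) D β ‖z‖ :=
          one_sub_sq_mul_le_blochMajorant (by linarith) hD hβ (norm_nonneg z) hz1
            (norm_nonneg _) hderiv hdilat
      _ ≤ _ := by gcongr
  have hbound_nonneg : 0 ≤ (1 + β) / D * blochMajorant (1 - α) D β r₀ := by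
    unfold blochMajorant
    have : 0 ≤ 1 + r₀ - r₀ ^ 2 - r₀ ^ 3 := by nlinarith
    have : 0 ≤ D + (1 - α) * r₀ := by nlinarith
    positivity
  exact Real.iSup_le (fun z => Real.iSup_le (hpoint z) hbound_nonneg) hbound_nonneg

theorem bloch_constant_bound
    (α β δ : ℝ) (hα0 : 0 ≤ α) (hα1 : α < 1) (hβ0 : 0 < β) (hβ1 : β < 1)
    (hδ : 0 ≤ δ)
    (h g w : ℂ → ℂ) (a : ℕ → ℂ)
    (ha0 : a 0 = 0) (ha1 : a 1 = 1)
    (hreph : ∀ z ∈ ball (0 : ℂ) 1, HasSum (fun n : ℕ => a n * z ^ n) (h z))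
    (hsb : Summable fun n : ℕ =>
      ((n : ℝ) + 2) ^ δ * (((n : ℝ) + 2 - α) / (1 - α)) * ‖a (n + 2)‖)
    (hcoef : ∑' n : ℕ,
      ((n : ℝ) + 2) ^ δ * (((n : ℝ) + 2 - α) / (1 - α)) * ‖a (n + 2)‖ ≤ 1)
    (hw : DifferentiableOn ℂ w (ball (0 : ℂ) 1))
    (hwlt : ∀ z ∈ ball (0 : ℂ) 1, ‖w z‖ < 1)
    (hw0 : ‖w 0‖ = β)
    (hdil : ∀ z ∈ ball (0 : ℂ) 1, deriv g z = w z * deriv h z)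
    (r₀ : ℝ) (hr₀ : r₀ ∈ Set.Ioo (0 : ℝ) 1)
    (hroot : (2 : ℝ) ^ (δ - 1) * (2 - α) * (1 - β) + (1 - α) -
        2 * ((2 : ℝ) ^ (δ - 1) * (2 - α) - (1 - α)) * r₀ -
        ((2 : ℝ) ^ (δ - 1) * (2 - α) * (3 + β) + (1 - α) * (3 - β)) * r₀ ^ 2 -
        ((2 : ℝ) ^ δ * (2 - α) * β + (1 - α) * (4 + 2 * β)) * r₀ ^ 3 -
        3 * (1 - α) * β * r₀ ^ 4 = 0) :
    (⨆ z ∈ ball (0 : ℂ) 1,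
        (1 - ‖z‖ ^ 2) * (‖deriv h z‖ + ‖deriv g z‖)) ≤
      (1 + β) / ((2 - α) * (2 : ℝ) ^ (δ - 1)) *
        ((1 + r₀ - r₀ ^ 2 - r₀ ^ 3) *
            ((2 - α) * (2 : ℝ) ^ (δ - 1) + (1 - α) * r₀) /
          (1 + β * r₀)) :=
  bloch_constant_bound_general α β δ hα0 hα1 hδ h g w a ha1 hreph hsb hcoef hw hwlt hw0 hdil r₀ hr₀
    hroot
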